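/- There exists a constant C > 0 depending only on the weighted graph (V, ω, μ), on G, H, u₀, v₀, N1 and N2, such that for every λ > 0 and every solution (u, v) of (S_λ) with u₀ + u ≤ 0 and v₀ + v ≤ 0 on V, one has ‖u‖_{W^{1,2}} ≤ C·(1 + λ + λ²) and ‖v‖_{W^{1,2}} ≤ C·(1 + λ + λ²). -/

import Mathlib

open Real Finset

/-- The μ-Laplacian on a finite weighted graph. -/
noncomputable def graphLap {V : Type*} [Fintype V] (ω : V → V → ℝ) (μ : V → ℝ)
    (f : V → ℝ) (x : V) : ℝ :=
  (1 / μ x) * ∑ y, ω x y * (f y - f x)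

/-- The integral of `f` over `V` with respect to the measure `μ`. -/
noncomputable def graphInt {V : Type*} [Fintype V] (μ : V → ℝ) (f : V → ℝ) : ℝ :=
  ∑ x, μ x * f x

/-- The total volume `|V|` of the graph. -/
noncomputable def graphVol {V : Type*} [Fintype V] (μ : V → ℝ) : ℝ :=
  ∑ x, μ x

/-- The Dirac delta mass at vertex `p`. -/
noncomputable def diracDelta {V : Type*} [DecidableEq V] (μ : V → ℝ) (p x : V) : ℝ :=
  if x = p then 1 / μ p else 0

/-- `primFun F t = ∫_{√t}^{1} 2 s F(s²) ds`; this gives `g` from `G` and `h` from `H`. -/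
noncomputable def primFun (F : ℝ → ℝ) (t : ℝ) : ℝ :=
  ∫ s in Real.sqrt t..(1 : ℝ), 2 * s * F (s ^ 2)

/-- The pointwise squared gradient `|∇ f|²(x)`. -/
noncomputable def gradSq {V : Type*} [Fintype V] (ω : V → V → ℝ) (μ : V → ℝ)
    (f : V → ℝ) (x : V) : ℝ :=
  (1 / (2 * μ x)) * ∑ y, ω x y * (f y - f x) ^ 2

/-- The gradient norm `‖∇ f‖₂ = (∫_V |∇ f|² dμ)^{1/2}`. -/
noncomputable def gradNorm {V : Type*} [Fintype V] (ω : V → V → ℝ) (μ : V → ℝ)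
    (f : V → ℝ) : ℝ :=
  Real.sqrt (graphInt μ (gradSq ω μ f))

/-- The mean value `f̄ = (1/|V|) ∫_V f dμ`. -/
noncomputable def graphAvg {V : Type*} [Fintype V] (μ : V → ℝ) (f : V → ℝ) : ℝ :=
  (1 / graphVol μ) * graphInt μ f

/-- The `W^{1,2}(V)` norm, `(∫_V (|∇ f|² + f²) dμ)^{1/2}`. -/
noncomputable def sobolevNorm {V : Type*} [Fintype V] (ω : V → V → ℝ) (μ : V → ℝ)
    (f : V → ℝ) : ℝ :=
  Real.sqrt (graphInt μ (fun x => gradSq ω μ f x + f x ^ 2))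

/-- `(u, v)` is a solution of the system `(S_λ)`. -/
def isSolution {V : Type*} [Fintype V] (ω : V → V → ℝ) (μ : V → ℝ)
    (G H : ℝ → ℝ) (N1 N2 : ℕ) (u₀ v₀ : V → ℝ) (lam : ℝ) (u v : V → ℝ) : Prop :=
  ∀ x, graphLap ω μ u x =
      -lam * Real.exp (v₀ x + v x) * H (Real.exp (v₀ x + v x)) *
        primFun G (Real.exp (u₀ x + u x)) + 4 * Real.pi * N1 / graphVol μ ∧
    graphLap ω μ v x =
      -lam * Real.exp (u₀ x + u x) * G (Real.exp (u₀ x + u x)) *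
        primFun H (Real.exp (v₀ x + v x)) + 4 * Real.pi * N2 / graphVol μ

/-- `(u, v)` is a lower solution of the system `(S_λ)`. -/
def isLowerSolution {V : Type*} [Fintype V] (ω : V → V → ℝ) (μ : V → ℝ)
    (G H : ℝ → ℝ) (N1 N2 : ℕ) (u₀ v₀ : V → ℝ) (lam : ℝ) (u v : V → ℝ) : Prop :=
  ∀ x, graphLap ω μ u x ≥
      -lam * Real.exp (v₀ x + v x) * H (Real.exp (v₀ x + v x)) *
        primFun G (Real.exp (u₀ x + u x)) + 4 * Real.pi * N1 / graphVol μ ∧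
    graphLap ω μ v x ≥
      -lam * Real.exp (u₀ x + u x) * G (Real.exp (u₀ x + u x)) *
        primFun H (Real.exp (v₀ x + v x)) + 4 * Real.pi * N2 / graphVol μ

/-- `(uM, vM)` is a maximal solution of `(S_λ)`: it solves the system and any other
solution lies strictly below it. -/
def isMaximalSolution {V : Type*} [Fintype V] (ω : V → V → ℝ) (μ : V → ℝ)
    (G H : ℝ → ℝ) (N1 N2 : ℕ) (u₀ v₀ : V → ℝ) (lam : ℝ) (uM vM : V → ℝ) : Prop :=
  isSolution ω μ G H N1 N2 u₀ v₀ lam uM vM ∧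
    ∀ u' v', isSolution ω μ G H N1 N2 u₀ v₀ lam u' v' → (u', v') ≠ (uM, vM) →
      ∀ x, u' x < uM x ∧ v' x < vM x


section Infra

variable {V : Type*} [Fintype V]

lemma sum_antisymm (F : V → V → ℝ) (h : ∀ x y, F x y = -F y x) :
    ∑ x, ∑ y, F x y = 0 := by
  have h2 : ∑ x : V, ∑ y : V, F x y = ∑ x : V, ∑ y : V, -F x y := by
    rw [Finset.sum_comm]
    exact Finset.sum_congr rfl fun x _ => Finset.sum_congr rfl fun y _ => h y x
  simp only [Finset.sum_neg_distrib] at h2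
  linarith

lemma graphInt_lap_zero (ω : V → V → ℝ) (μ : V → ℝ)
    (hω_symm : ∀ x y, ω x y = ω y x) (hμ : ∀ x, 0 < μ x) (f : V → ℝ) :
    graphInt μ (graphLap ω μ f) = 0 := by
  unfold graphInt graphLap
  have : ∀ x : V, μ x * ((1 / μ x) * ∑ y, ω x y * (f y - f x))
      = ∑ y, ω x y * (f y - f x) := by
    intro x
    have hx := (hμ x).ne'
    field_simp
  rw [Finset.sum_congr rfl fun x _ => this x]
  exact sum_antisymm _ (fun x y => by rw [hω_symm]; ring)

lemma graphInt_gradSq (ω : V → V → ℝ) (μ : V → ℝ)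
    (hω_symm : ∀ x y, ω x y = ω y x) (hμ : ∀ x, 0 < μ x) (f : V → ℝ) :
    graphInt μ (gradSq ω μ f) = - graphInt μ (fun x => f x * graphLap ω μ f x) := by
  have key : graphInt μ (gradSq ω μ f) + graphInt μ (fun x => f x * graphLap ω μ f x) = 0 := by
    unfold graphInt gradSq graphLap
    rw [← Finset.sum_add_distrib]
    have : ∀ x : V, μ x * ((1 / (2 * μ x)) * ∑ y, ω x y * (f y - f x) ^ 2)
        + μ x * (f x * ((1 / μ x) * ∑ y, ω x y * (f y - f x)))
        = ∑ y, (ω x y * (f y - f x) ^ 2 / 2 + f x * (ω x y * (f y - f x))) := by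
      intro x
      have hx := (hμ x).ne'
      have e1 : μ x * ((1 / (2 * μ x)) * ∑ y, ω x y * (f y - f x) ^ 2)
          = (∑ y, ω x y * (f y - f x) ^ 2) / 2 := by field_simp
      have e2 : μ x * (f x * ((1 / μ x) * ∑ y, ω x y * (f y - f x)))
          = f x * ∑ y, ω x y * (f y - f x) := by field_simp
      rw [e1, e2, Finset.sum_add_distrib, ← Finset.sum_div, ← Finset.mul_sum]
    rw [Finset.sum_congr rfl fun x _ => this x]
    have : ∀ x y : V, ω x y * (f y - f x) ^ 2 / 2 + f x * (ω x y * (f y - f x))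
        = ω x y * (f y ^ 2 - f x ^ 2) / 2 := by intro x y; ring
    rw [Finset.sum_congr rfl fun x _ => Finset.sum_congr rfl fun y _ => this x y]
    exact sum_antisymm _ (fun x y => by rw [hω_symm]; ring)
  linarith

lemma gradSq_nonneg (ω : V → V → ℝ) (μ : V → ℝ)
    (hω_nonneg : ∀ x y, 0 ≤ ω x y) (hμ : ∀ x, 0 < μ x) (f : V → ℝ) (x : V) :
    0 ≤ gradSq ω μ f x := by
  unfold gradSq
  have := hμ x
  apply mul_nonneg (by positivity)
  exact Finset.sum_nonneg fun y _ => mul_nonneg (hω_nonneg x y) (sq_nonneg _)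

lemma graphInt_nonneg (μ : V → ℝ) (hμ : ∀ x, 0 < μ x) (f : V → ℝ)
    (hf : ∀ x, 0 ≤ f x) : 0 ≤ graphInt μ f :=
  Finset.sum_nonneg fun x _ => mul_nonneg (hμ x).le (hf x)

lemma graphInt_mono (μ : V → ℝ) (hμ : ∀ x, 0 < μ x) (f g : V → ℝ)
    (hfg : ∀ x, f x ≤ g x) : graphInt μ f ≤ graphInt μ g :=
  Finset.sum_le_sum fun x _ => mul_le_mul_of_nonneg_left (hfg x) (hμ x).le

lemma single_le_graphInt (μ : V → ℝ) (hμ : ∀ x, 0 < μ x) (f : V → ℝ)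
    (hf : ∀ x, 0 ≤ f x) (x : V) : μ x * f x ≤ graphInt μ f :=
  Finset.single_le_sum (fun y _ => mul_nonneg (hμ y).le (hf y)) (Finset.mem_univ x)

lemma gradSq_sub_const (ω : V → V → ℝ) (μ : V → ℝ) (f : V → ℝ) (c : ℝ) :
    gradSq ω μ (fun y => f y - c) = gradSq ω μ f := by
  funext x; unfold gradSq; congr 1; apply Finset.sum_congr rfl; intro y _; ring_nf

lemma graphLap_sub_const (ω : V → V → ℝ) (μ : V → ℝ) (f : V → ℝ) (c : ℝ) :
    graphLap ω μ (fun y => f y - c) = graphLap ω μ f := by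
  funext x; unfold graphLap; congr 1; apply Finset.sum_congr rfl; intro y _; ring_nf

lemma graphInt_const (μ : V → ℝ) (c : ℝ) : graphInt μ (fun _ => c) = c * graphVol μ := by
  unfold graphInt graphVol; rw [Finset.mul_sum]; exact Finset.sum_congr rfl fun x _ => by ring

end Infra

section Poincare

variable {V : Type*} [Fintype V] [DecidableEq V]

lemma graphVol_pos (μ : V → ℝ) [Nonempty V] (hμ : ∀ x, 0 < μ x) : 0 < graphVol μ :=
  Finset.sum_pos (fun x _ => hμ x) Finset.univ_nonempty

lemma gradSq_smul (ω : V → V → ℝ) (μ : V → ℝ) (f : V → ℝ) (c : ℝ) (x : V) :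
    gradSq ω μ (fun y => c * f y) x = c ^ 2 * gradSq ω μ f x := by
  unfold gradSq
  show (1 / (2 * μ x)) * ∑ y, ω x y * (c * f y - c * f x) ^ 2 = _
  have e : ∑ y, ω x y * (c * f y - c * f x) ^ 2 = c ^ 2 * ∑ y, ω x y * (f y - f x) ^ 2 := by
    rw [Finset.mul_sum]; exact Finset.sum_congr rfl fun y _ => by ring
  rw [e]; ring

lemma graphInt_smul (μ : V → ℝ) (f : V → ℝ) (c : ℝ) :
    graphInt μ (fun x => c * f x) = c * graphInt μ f := by
  unfold graphInt; rw [Finset.mul_sum]; exact Finset.sum_congr rfl fun x _ => by ring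

/-- If the total gradient energy vanishes, `f` takes equal values on adjacent vertices. -/
lemma eq_of_gradInt_zero (ω : V → V → ℝ) (μ : V → ℝ)
    (hω_nonneg : ∀ x y, 0 ≤ ω x y) (hμ : ∀ x, 0 < μ x) (f : V → ℝ)
    (h0 : graphInt μ (gradSq ω μ f) = 0) :
    ∀ x y, 0 < ω x y → f x = f y := by
  intro x y hxy
  by_contra hne
  have hterm : 0 < ω x y * (f y - f x) ^ 2 := by
    apply mul_pos hxy
    have : f y - f x ≠ 0 := sub_ne_zero.mpr (fun h => hne h.symm)
    positivity
  have hxpos : 0 < μ x * gradSq ω μ f x := by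
    apply mul_pos (hμ x)
    unfold gradSq
    have h1 : 0 < (1 / (2 * μ x)) := by have := hμ x; positivity
    apply mul_pos h1
    have : ω x y * (f y - f x) ^ 2 ≤ ∑ z, ω x z * (f z - f x) ^ 2 :=
      Finset.single_le_sum (f := fun z => ω x z * (f z - f x) ^ 2)
        (fun z _ => mul_nonneg (hω_nonneg x z) (sq_nonneg _)) (Finset.mem_univ y)
    linarith
  have : μ x * gradSq ω μ f x ≤ graphInt μ (gradSq ω μ f) :=
    single_le_graphInt μ hμ _ (gradSq_nonneg ω μ hω_nonneg hμ f) x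
  linarith

lemma poincare (hV : 1 < Fintype.card V) (ω : V → V → ℝ) (μ : V → ℝ)
    (hω_nonneg : ∀ x y, 0 ≤ ω x y) (hω_symm : ∀ x y, ω x y = ω y x)
    (hconn : ∀ x y : V, x ≠ y → ∃ (n : ℕ) (c : Fin (n + 1) → V),
      c 0 = x ∧ c (Fin.last n) = y ∧ ∀ i : Fin n, 0 < ω (c i.castSucc) (c i.succ))
    (hμ : ∀ x, 0 < μ x) :
    ∃ Cp : ℝ, 0 < Cp ∧ ∀ f : V → ℝ, graphAvg μ f = 0 →
      graphInt μ (fun x => f x ^ 2) ≤ Cp * graphInt μ (gradSq ω μ f) := by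
  haveI hne : Nonempty V := Fintype.card_pos_iff.mp (by omega)
  have hvol : 0 < graphVol μ := graphVol_pos μ hμ
  have hvne : graphVol μ ≠ 0 := hvol.ne'
  -- the sphere
  set S : Set (V → ℝ) := {f | graphAvg μ f = 0 ∧ graphInt μ (fun x => f x ^ 2) = 1} with hS
  have cInt : ∀ g : (V → ℝ) → V → ℝ, (∀ x, Continuous (fun f => g f x)) →
      Continuous (fun f : V → ℝ => graphInt μ (g f)) := by
    intro g hg
    unfold graphInt
    exact continuous_finset_sum _ fun x _ => (continuous_const.mul (hg x))
  have cSq : Continuous (fun f : V → ℝ => graphInt μ (fun x => f x ^ 2)) :=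
    cInt _ (fun x => (continuous_apply x).pow 2)
  have cAvg : Continuous (fun f : V → ℝ => graphAvg μ f) := by
    unfold graphAvg
    exact continuous_const.mul (cInt _ (fun x => continuous_apply x))
  have cGrad : Continuous (fun f : V → ℝ => graphInt μ (gradSq ω μ f)) := by
    apply cInt
    intro x
    unfold gradSq
    exact continuous_const.mul (continuous_finset_sum _ fun y _ =>
      continuous_const.mul (((continuous_apply y).sub (continuous_apply x)).pow 2))
  have hSclosed : IsClosed S := by
    have h1 : IsClosed {f : V → ℝ | graphAvg μ f = 0} := isClosed_eq cAvg continuous_const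
    have h2 : IsClosed {f : V → ℝ | graphInt μ (fun x => f x ^ 2) = 1} :=
      isClosed_eq cSq continuous_const
    exact h1.inter h2
  -- boundedness
  obtain ⟨z₀⟩ := id hne
  have hμmin : ∃ m : ℝ, 0 < m ∧ ∀ x, m ≤ μ x := by
    obtain ⟨x, -, hx⟩ := Finset.exists_min_image Finset.univ μ Finset.univ_nonempty
    exact ⟨μ x, hμ x, fun y => hx y (Finset.mem_univ y)⟩
  obtain ⟨m, hm, hmle⟩ := hμmin
  have hSbdd : Bornology.IsBounded S := by
    apply Metric.isBounded_iff_subset_closedBall 0 |>.mpr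
    refine ⟨Real.sqrt (1 / m), fun f hf => ?_⟩
    rw [Metric.mem_closedBall, dist_zero_right]
    rw [pi_norm_le_iff_of_nonneg (Real.sqrt_nonneg _)]
    intro x
    have h1 : μ x * f x ^ 2 ≤ 1 := by
      have := single_le_graphInt μ hμ (fun x => f x ^ 2) (fun x => sq_nonneg _) x
      rw [hf.2] at this; exact this
    have h2 : f x ^ 2 ≤ 1 / m := by
      have hmx := hmle x
      rw [le_div_iff₀ hm]
      nlinarith [mul_le_mul_of_nonneg_left hmx (sq_nonneg (f x))]
    have : ‖f x‖ = Real.sqrt (f x ^ 2) := by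
      rw [Real.sqrt_sq_eq_abs, Real.norm_eq_abs]
    rw [this]
    exact Real.sqrt_le_sqrt h2
  have hScompact : IsCompact S := Metric.isCompact_of_isClosed_isBounded hSclosed hSbdd
  -- nonemptiness
  obtain ⟨a, b, hab⟩ := Fintype.one_lt_card_iff.mp hV
  have hSne : S.Nonempty := by
    set φ : V → ℝ := fun z => if z = a then 1 else 0 with hφ
    set c : ℝ := graphAvg μ φ with hc
    set ψ : V → ℝ := fun z => φ z - c with hψ
    have havgψ : graphAvg μ ψ = 0 := by
      have hI : graphInt μ ψ = graphInt μ φ - c * graphVol μ := by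
        unfold graphInt graphVol
        rw [Finset.mul_sum, ← Finset.sum_sub_distrib]
        exact Finset.sum_congr rfl fun x _ => by simp [hψ]; ring
      show (1 / graphVol μ) * graphInt μ ψ = 0
      rw [hI]
      have hcc : c = (1 / graphVol μ) * graphInt μ φ := rfl
      rw [hcc]
      field_simp
      ring
    have hψne : ψ a ≠ ψ b := by
      simp only [hψ, hφ]
      simp [hab.symm, hab]
    have ht : 0 < graphInt μ (fun x => ψ x ^ 2) := by
      rcases lt_or_eq_of_le (graphInt_nonneg μ hμ _ (fun x => sq_nonneg (ψ x))) with h | h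
      · exact h
      · exfalso
        have hall : ∀ x, ψ x = 0 := by
          intro x
          have h1 : μ x * ψ x ^ 2 ≤ 0 := by
            have h2 := single_le_graphInt μ hμ (fun z => ψ z ^ 2) (fun z => sq_nonneg _) x
            rw [← h] at h2
            exact h2
          have h3 : ψ x ^ 2 = 0 := le_antisymm (by nlinarith [hμ x]) (sq_nonneg _)
          exact pow_eq_zero_iff (by norm_num) |>.mp h3
        exact hψne (by rw [hall a, hall b])
    set r : ℝ := Real.sqrt (graphInt μ (fun x => ψ x ^ 2)) with hr
    have hrpos : 0 < r := Real.sqrt_pos.mpr ht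
    refine ⟨fun x => r⁻¹ * ψ x, ?_, ?_⟩
    · unfold graphAvg
      rw [graphInt_smul]
      unfold graphAvg at havgψ
      have : graphInt μ ψ = 0 := by
        rcases mul_eq_zero.mp havgψ with h | h
        · exfalso; have : (1:ℝ)/graphVol μ ≠ 0 := by positivity
          exact this h
        · exact h
      rw [this]; ring
    · have e : (fun x => (r⁻¹ * ψ x) ^ 2) = fun x => r⁻¹ ^ 2 * ψ x ^ 2 := by
        funext x; ring
      show graphInt μ (fun x => (r⁻¹ * ψ x) ^ 2) = 1
      rw [e, graphInt_smul, ← Real.sqrt_inv, Real.sq_sqrt (inv_nonneg.mpr ht.le)]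
      exact inv_mul_cancel₀ ht.ne'
  -- minimum of gradient energy on S
  obtain ⟨f₀, hf₀S, hf₀min⟩ := hScompact.exists_isMinOn hSne cGrad.continuousOn
  set mE : ℝ := graphInt μ (gradSq ω μ f₀) with hmE
  have hmEnn : 0 ≤ mE := graphInt_nonneg μ hμ _ (gradSq_nonneg ω μ hω_nonneg hμ f₀)
  have hmEpos : 0 < mE := by
    rcases lt_or_eq_of_le hmEnn with h | h
    · exact h
    · exfalso
      have hadj := eq_of_gradInt_zero ω μ hω_nonneg hμ f₀ h.symm
      have hconst : ∀ x, f₀ x = f₀ z₀ := by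
        intro x
        by_cases hx : x = z₀
        · rw [hx]
        · obtain ⟨n, c, hc0, hcl, hcp⟩ := hconn x z₀ hx
          have key : ∀ i : Fin (n + 1), f₀ (c 0) = f₀ (c i) := by
            intro i
            induction i using Fin.induction with
            | zero => rfl
            | succ j ih => exact ih.trans (hadj _ _ (hcp j))
          have := key (Fin.last n)
          rw [hc0, hcl] at this
          exact this
      have hint : graphInt μ f₀ = f₀ z₀ * graphVol μ := by
        unfold graphInt graphVol
        rw [Finset.mul_sum]
        exact Finset.sum_congr rfl fun x _ => by rw [hconst x]; ring
      have havg0 := hf₀S.1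
      unfold graphAvg at havg0
      rw [hint] at havg0
      have hz0 : f₀ z₀ = 0 := by
        have h1 : (1:ℝ) / graphVol μ ≠ 0 := by positivity
        have := mul_eq_zero.mp havg0
        rcases this with h | h
        · exact absurd h h1
        · rcases mul_eq_zero.mp h with h | h
          · exact h
          · exact absurd h hvol.ne'
      have : graphInt μ (fun x => f₀ x ^ 2) = 0 := by
        apply Finset.sum_eq_zero
        intro x _
        show μ x * f₀ x ^ 2 = 0
        rw [hconst x, hz0]; ring
      rw [hf₀S.2] at this
      norm_num at this
  refine ⟨1 / mE, by positivity, ?_⟩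
  intro f havg
  rcases eq_or_lt_of_le (graphInt_nonneg μ hμ (fun x => f x ^ 2) (fun x => sq_nonneg _)) with h | h
  · rw [← h]
    have := graphInt_nonneg μ hμ _ (gradSq_nonneg ω μ hω_nonneg hμ f)
    positivity
  · set t : ℝ := graphInt μ (fun x => f x ^ 2) with hts
    set r : ℝ := Real.sqrt t with hr
    have hrpos : 0 < r := Real.sqrt_pos.mpr h
    have hmem : (fun x => r⁻¹ * f x) ∈ S := by
      constructor
      · show graphAvg μ (fun x => r⁻¹ * f x) = 0
        unfold graphAvg
        rw [graphInt_smul]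
        unfold graphAvg at havg
        rcases mul_eq_zero.mp havg with h' | h'
        · exfalso; have : (1:ℝ)/graphVol μ ≠ 0 := by positivity
          exact this h'
        · rw [h']; ring
      · show graphInt μ (fun x => (r⁻¹ * f x) ^ 2) = 1
        have e : (fun x => (r⁻¹ * f x) ^ 2) = fun x => r⁻¹ ^ 2 * f x ^ 2 := by
          funext x; ring
        rw [e, graphInt_smul, ← Real.sqrt_inv, Real.sq_sqrt (inv_nonneg.mpr h.le)]
        exact inv_mul_cancel₀ h.ne'
    have egrad : graphInt μ (gradSq ω μ (fun x => r⁻¹ * f x)) = r⁻¹ ^ 2 * graphInt μ (gradSq ω μ f) := by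
      have e : gradSq ω μ (fun x => r⁻¹ * f x) = fun x => r⁻¹ ^ 2 * gradSq ω μ f x := by
        funext x; exact gradSq_smul ω μ f r⁻¹ x
      rw [e, graphInt_smul]
    have hlow : mE ≤ r⁻¹ ^ 2 * graphInt μ (gradSq ω μ f) := by
      have h' : mE ≤ graphInt μ (gradSq ω μ (fun x => r⁻¹ * f x)) := hf₀min hmem
      rwa [egrad] at h'
    have hr2 : r ^ 2 = t := Real.sq_sqrt h.le
    have hlow' : mE * t ≤ graphInt μ (gradSq ω μ f) := by
      have h2 : mE ≤ r⁻¹ ^ 2 * graphInt μ (gradSq ω μ f) := hlow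
      have hrne : r ≠ 0 := hrpos.ne'
      have := mul_le_mul_of_nonneg_left h2 (le_of_lt (by positivity : (0:ℝ) < r ^ 2))
      calc mE * t = r ^ 2 * mE := by rw [hr2]; ring
        _ ≤ r ^ 2 * (r⁻¹ ^ 2 * graphInt μ (gradSq ω μ f)) := by
            apply mul_le_mul_of_nonneg_left h2 (by positivity)
        _ = graphInt μ (gradSq ω μ f) := by field_simp
    rw [div_mul_eq_mul_div, le_div_iff₀ hmEpos]
    linarith [hlow']

end Poincare

section Prim

lemma primFun_cont (F : ℝ → ℝ) (hFs : ContDiffOn ℝ (⊤ : ℕ∞) F (Set.Ici 0)) :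
    ContinuousOn (fun s : ℝ => 2 * s * F (s ^ 2)) Set.univ := by
  apply ContinuousOn.mul
  · exact (continuous_const.mul continuous_id).continuousOn
  · exact hFs.continuousOn.comp (continuous_pow 2).continuousOn
      (fun x _ => Set.mem_Ici.mpr (sq_nonneg x))

lemma primFun_intable (F : ℝ → ℝ) (hFs : ContDiffOn ℝ (⊤ : ℕ∞) F (Set.Ici 0)) (a b : ℝ) :
    IntervalIntegrable (fun s : ℝ => 2 * s * F (s ^ 2)) MeasureTheory.volume a b :=
  ((primFun_cont F hFs).mono (Set.subset_univ _)).intervalIntegrable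

lemma primFun_nonneg (F : ℝ → ℝ) (hFpos : ∀ s, 0 ≤ s → 0 < F s) (t : ℝ)
    (ht1 : t ≤ 1) : 0 ≤ primFun F t := by
  unfold primFun
  apply intervalIntegral.integral_nonneg
  · rcases le_or_gt t 0 with h | h
    · rw [Real.sqrt_eq_zero_of_nonpos h]; norm_num
    · exact Real.sqrt_le_one.mpr ht1
  · intro s hs
    have hs0 : 0 ≤ s := le_trans (Real.sqrt_nonneg t) hs.1
    have := hFpos (s ^ 2) (sq_nonneg s)
    nlinarith

lemma primFun_le_zero (F : ℝ → ℝ) (hFpos : ∀ s, 0 ≤ s → 0 < F s)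
    (hFs : ContDiffOn ℝ (⊤ : ℕ∞) F (Set.Ici 0)) (t : ℝ) (ht0 : 0 ≤ t) (ht1 : t ≤ 1) :
    primFun F t ≤ primFun F 0 := by
  unfold primFun
  rw [Real.sqrt_zero]
  rw [← intervalIntegral.integral_add_adjacent_intervals
    (primFun_intable F hFs 0 (Real.sqrt t)) (primFun_intable F hFs (Real.sqrt t) 1)]
  have h1 : 0 ≤ ∫ s in (0:ℝ)..(Real.sqrt t), 2 * s * F (s ^ 2) := by
    apply intervalIntegral.integral_nonneg (Real.sqrt_nonneg t)
    intro s hs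
    have := hFpos (s ^ 2) (sq_nonneg s)
    nlinarith [hs.1]
  linarith

lemma primFun_zero_pos (F : ℝ → ℝ) (hFpos : ∀ s, 0 ≤ s → 0 < F s)
    (hFs : ContDiffOn ℝ (⊤ : ℕ∞) F (Set.Ici 0)) : 0 < primFun F 0 := by
  unfold primFun
  rw [Real.sqrt_zero]
  apply intervalIntegral.intervalIntegral_pos_of_pos_on (primFun_intable F hFs 0 1)
  · intro s hs
    have := hFpos (s ^ 2) (sq_nonneg s)
    nlinarith [hs.1, hs.2]
  · norm_num

end Prim

section More

variable {V : Type*} [Fintype V]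

lemma graphInt_add (μ : V → ℝ) (f g : V → ℝ) :
    graphInt μ (fun x => f x + g x) = graphInt μ f + graphInt μ g := by
  unfold graphInt
  rw [← Finset.sum_add_distrib]
  exact Finset.sum_congr rfl fun x _ => by ring

lemma graphInt_affine (μ : V → ℝ) (f : V → ℝ) (a b : ℝ) :
    graphInt μ (fun x => a * f x + b) = a * graphInt μ f + b * graphVol μ := by
  unfold graphInt graphVol
  rw [Finset.mul_sum, Finset.mul_sum, ← Finset.sum_add_distrib]
  exact Finset.sum_congr rfl fun x _ => by ring

lemma graphAvg_sub_const (μ : V → ℝ) [Nonempty V] (hμ : ∀ x, 0 < μ x) (f : V → ℝ) (c : ℝ) :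
    graphAvg μ (fun x => f x - c) = graphAvg μ f - c := by
  have hvol : 0 < graphVol μ := Finset.sum_pos (fun x _ => hμ x) Finset.univ_nonempty
  have h : graphInt μ (fun x => f x - c) = graphInt μ f - c * graphVol μ := by
    unfold graphInt graphVol
    rw [Finset.mul_sum, ← Finset.sum_sub_distrib]
    exact Finset.sum_congr rfl fun x _ => by ring
  unfold graphAvg
  rw [h]
  have hne := hvol.ne'
  field_simp

end More

set_option maxHeartbeats 2000000 in
lemma master
    {V : Type*} [Fintype V] [DecidableEq V]
    (hV : 1 < Fintype.card V)
    (ω : V → V → ℝ) (μ : V → ℝ)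
    (hω_nonneg : ∀ x y, 0 ≤ ω x y)
    (hω_symm : ∀ x y, ω x y = ω y x)
    (hconn : ∀ x y : V, x ≠ y → ∃ (n : ℕ) (c : Fin (n + 1) → V),
      c 0 = x ∧ c (Fin.last n) = y ∧ ∀ i : Fin n, 0 < ω (c i.castSucc) (c i.succ))
    (hμ : ∀ x, 0 < μ x)
    (G H : ℝ → ℝ)
    (hGpos : ∀ s, 0 ≤ s → 0 < G s) (hHpos : ∀ s, 0 ≤ s → 0 < H s)
    (hGmono : StrictMonoOn G (Set.Ici 0)) (hHmono : StrictMonoOn H (Set.Ici 0))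
    (hGsmooth : ContDiffOn ℝ (⊤ : ℕ∞) G (Set.Ici 0)) (hHsmooth : ContDiffOn ℝ (⊤ : ℕ∞) H (Set.Ici 0))
    (N1 N2 : ℕ) (hN2 : 0 < N2)
    (u₀ v₀ : V → ℝ) :
    ∃ C : ℝ, 0 < C ∧ ∀ lam : ℝ, 0 < lam → ∀ u v : V → ℝ,
      isSolution ω μ G H N1 N2 u₀ v₀ lam u v →
      (∀ x, u₀ x + u x ≤ 0) → (∀ x, v₀ x + v x ≤ 0) →
      sobolevNorm ω μ u ≤ C * (1 + lam + lam ^ 2) := by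
  haveI hne : Nonempty V := Fintype.card_pos_iff.mp (by omega)
  obtain ⟨z₀⟩ := id hne
  have hvol : 0 < graphVol μ := graphVol_pos μ hμ
  obtain ⟨Cp, hCp, hPoin⟩ := poincare hV ω μ hω_nonneg hω_symm hconn hμ
  obtain ⟨xm, -, hxm⟩ := Finset.exists_min_image Finset.univ μ Finset.univ_nonempty
  have hm : 0 < μ xm := hμ xm
  have hmle : ∀ x, μ xm ≤ μ x := fun x => hxm x (Finset.mem_univ x)
  obtain ⟨xM, -, hxM⟩ := Finset.exists_max_image Finset.univ μ Finset.univ_nonempty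
  have hMμ : 0 < μ xM := hμ xM
  have hMμge : ∀ x, μ x ≤ μ xM := fun x => hxM x (Finset.mem_univ x)
  set B : ℝ := Finset.univ.sup' Finset.univ_nonempty (fun x => |u₀ x|) with hB_def
  have hB : ∀ x, |u₀ x| ≤ B := by
    intro x
    rw [hB_def]
    exact Finset.le_sup' (fun z => |u₀ z|) (Finset.mem_univ x)
  have hB0 : 0 ≤ B := le_trans (abs_nonneg _) (hB z₀)
  set g0 : ℝ := primFun G 0 with hg0_def
  set h0 : ℝ := primFun H 0 with hh0_def
  have hg0 : 0 < g0 := primFun_zero_pos G hGpos hGsmooth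
  have hh0 : 0 < h0 := primFun_zero_pos H hHpos hHsmooth
  have hH1 : 0 < H 1 := hHpos 1 (by norm_num)
  have hG1 : 0 < G 1 := hGpos 1 (by norm_num)
  set n : ℝ := (Fintype.card V : ℝ) with hn_def
  have hn : 0 < n := by rw [hn_def]; exact_mod_cast Fintype.card_pos
  have hπ : 0 < Real.pi := Real.pi_pos
  have hN2' : (0:ℝ) < (N2 : ℝ) := by exact_mod_cast hN2
  set c₂ : ℝ := 4 * Real.pi * N2 / (n * μ xM * G 1 * h0) with hc2_def
  have hc₂ : 0 < c₂ := by rw [hc2_def]; positivity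
  set c₃ : ℝ := H 1 * g0 + 4 * Real.pi * N1 / graphVol μ with hc3_def
  have hc₃ : 0 < c₃ := by rw [hc3_def]; positivity
  set κ : ℝ := Cp * Real.sqrt (graphVol μ / μ xm) with hκ_def
  have hκ : 0 ≤ κ := by rw [hκ_def]; positivity
  set c₄ : ℝ := B + |Real.log c₂| + 1 + κ * c₃ with hc4_def
  have hc₄ : 0 < c₄ := by rw [hc4_def]; positivity
  set T : ℝ := Cp * graphVol μ * c₃ ^ 2 + 2 * Cp ^ 2 * graphVol μ * c₃ ^ 2
    + 2 * c₄ ^ 2 * graphVol μ with hT_def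
  have hT : 0 < T := by rw [hT_def]; positivity
  refine ⟨1 + Real.sqrt T, by positivity, ?_⟩
  intro lam hlam u v hsol hu hv
  -- exponential bounds
  have hEu_le : ∀ x, Real.exp (u₀ x + u x) ≤ 1 := by
    intro x
    have := Real.exp_le_exp.mpr (hu x)
    rwa [Real.exp_zero] at this
  have hEv_le : ∀ x, Real.exp (v₀ x + v x) ≤ 1 := by
    intro x
    have := Real.exp_le_exp.mpr (hv x)
    rwa [Real.exp_zero] at this
  -- pointwise Laplacian bound for u
  set MΔ : ℝ := lam * (H 1 * g0) + 4 * Real.pi * N1 / graphVol μ with hMΔ_def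
  have hMΔ0 : 0 ≤ MΔ := by rw [hMΔ_def]; positivity
  have hMΔle : MΔ ≤ c₃ * (1 + lam) := by
    rw [hMΔ_def, hc3_def]
    have h4 : 0 ≤ 4 * Real.pi * N1 / graphVol μ := by positivity
    linarith [mul_nonneg hlam.le h4, mul_nonneg hH1.le hg0.le]
  have hΔu : ∀ x, |graphLap ω μ u x| ≤ MΔ := by
    intro x
    have heq := (hsol x).1
    have hEv0 : (0:ℝ) < Real.exp (v₀ x + v x) := Real.exp_pos _
    have hEu0 : (0:ℝ) < Real.exp (u₀ x + u x) := Real.exp_pos _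
    have hH' : 0 < H (Real.exp (v₀ x + v x)) := hHpos _ hEv0.le
    have hg' : 0 ≤ primFun G (Real.exp (u₀ x + u x)) :=
      primFun_nonneg G hGpos _ (hEu_le x)
    have hHle : H (Real.exp (v₀ x + v x)) ≤ H 1 :=
      hHmono.monotoneOn (Set.mem_Ici.mpr hEv0.le) (Set.mem_Ici.mpr zero_le_one) (hEv_le x)
    have hgle : primFun G (Real.exp (u₀ x + u x)) ≤ g0 :=
      primFun_le_zero G hGpos hGsmooth _ hEu0.le (hEu_le x)
    have hprod : 0 ≤ Real.exp (v₀ x + v x) * H (Real.exp (v₀ x + v x)) *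
        primFun G (Real.exp (u₀ x + u x)) := by positivity
    have hprod2 : Real.exp (v₀ x + v x) * H (Real.exp (v₀ x + v x)) *
        primFun G (Real.exp (u₀ x + u x)) ≤ H 1 * g0 := by
      have h1 : Real.exp (v₀ x + v x) * H (Real.exp (v₀ x + v x)) ≤ H 1 := by
        have hx1 : 0 ≤ (1 - Real.exp (v₀ x + v x)) * H (Real.exp (v₀ x + v x)) :=
          mul_nonneg (by linarith [hEv_le x]) hH'.le
        linarith [hx1, hHle]
      have h2 : Real.exp (v₀ x + v x) * H (Real.exp (v₀ x + v x)) *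
          primFun G (Real.exp (u₀ x + u x)) ≤ H 1 * g0 :=
        mul_le_mul h1 hgle hg' hH1.le
      exact h2
    rw [abs_le]
    constructor
    · rw [heq, hMΔ_def]
      have : lam * (Real.exp (v₀ x + v x) * H (Real.exp (v₀ x + v x)) *
          primFun G (Real.exp (u₀ x + u x))) ≤ lam * (H 1 * g0) :=
        mul_le_mul_of_nonneg_left hprod2 hlam.le
      have h4 : 0 ≤ 4 * Real.pi * N1 / graphVol μ := by positivity
      linarith [this, h4]
    · rw [heq, hMΔ_def]
      have : 0 ≤ lam * (Real.exp (v₀ x + v x) * H (Real.exp (v₀ x + v x)) *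
          primFun G (Real.exp (u₀ x + u x))) := mul_nonneg hlam.le hprod
      linarith [this, mul_nonneg hlam.le (mul_nonneg hH1.le hg0.le)]
  -- integral of (Δu)²
  have hΔu2 : graphInt μ (fun x => (graphLap ω μ u x) ^ 2) ≤ MΔ ^ 2 * graphVol μ := by
    calc graphInt μ (fun x => (graphLap ω μ u x) ^ 2)
        ≤ graphInt μ (fun _ => MΔ ^ 2) := by
          apply graphInt_mono μ hμ
          intro x
          have h := abs_le.mp (hΔu x)
          have hx1 : 0 ≤ (MΔ - graphLap ω μ u x) * (MΔ + graphLap ω μ u x) :=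
            mul_nonneg (by linarith [h.2]) (by linarith [h.1])
          linarith [hx1]
      _ = MΔ ^ 2 * graphVol μ := graphInt_const μ _
  -- mean value and oscillation
  set ub : ℝ := graphAvg μ u with hub_def
  set w : V → ℝ := fun x => u x - ub with hw_def
  have havgw : graphAvg μ w = 0 := by
    rw [hw_def, graphAvg_sub_const μ hμ u ub, ← hub_def, sub_self]
  have hgradw : gradSq ω μ w = gradSq ω μ u := by
    rw [hw_def]; exact gradSq_sub_const ω μ u ub
  have hPw : graphInt μ (fun x => w x ^ 2) ≤ Cp * graphInt μ (gradSq ω μ u) := by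
    have := hPoin w havgw
    rwa [hgradw] at this
  set E : ℝ := graphInt μ (gradSq ω μ u) with hE_def
  have hEnn : 0 ≤ E := graphInt_nonneg μ hμ _ (gradSq_nonneg ω μ hω_nonneg hμ u)
  have hE1 : E = - graphInt μ (fun x => u x * graphLap ω μ u x) := by
    rw [hE_def]; exact graphInt_gradSq ω μ hω_symm hμ u
  have hlap0 : graphInt μ (graphLap ω μ u) = 0 := graphInt_lap_zero ω μ hω_symm hμ u
  have hsplit : graphInt μ (fun x => u x * graphLap ω μ u x)
      = graphInt μ (fun x => w x * graphLap ω μ u x) + ub * graphInt μ (graphLap ω μ u) := by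
    unfold graphInt
    rw [Finset.mul_sum, ← Finset.sum_add_distrib]
    apply Finset.sum_congr rfl
    intro x _
    show μ x * (u x * graphLap ω μ u x)
        = μ x * (w x * graphLap ω μ u x) + ub * (μ x * graphLap ω μ u x)
    have hwx : w x = u x - ub := by rw [hw_def]
    rw [hwx]; ring
  have hEeq : E = - graphInt μ (fun x => w x * graphLap ω μ u x) := by
    rw [hE1, hsplit, hlap0]; ring
  -- AM-GM trick
  have hptw : ∀ x, 2 * Cp * (-(w x * graphLap ω μ u x))
      ≤ w x ^ 2 + Cp ^ 2 * (graphLap ω μ u x) ^ 2 := by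
    intro x
    linarith [sq_nonneg (w x + Cp * graphLap ω μ u x)]
  have hneg : graphInt μ (fun x => -(w x * graphLap ω μ u x))
      = - graphInt μ (fun x => w x * graphLap ω μ u x) := by
    unfold graphInt
    rw [← Finset.sum_neg_distrib]
    exact Finset.sum_congr rfl fun x _ => by ring
  have hint1 : 2 * Cp * E ≤ graphInt μ (fun x => w x ^ 2)
      + Cp ^ 2 * graphInt μ (fun x => (graphLap ω μ u x) ^ 2) := by
    have h1 : graphInt μ (fun x => 2 * Cp * (-(w x * graphLap ω μ u x)))
        ≤ graphInt μ (fun x => w x ^ 2 + Cp ^ 2 * (graphLap ω μ u x) ^ 2) :=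
      graphInt_mono μ hμ _ _ hptw
    rw [graphInt_smul μ (fun x => -(w x * graphLap ω μ u x)) (2 * Cp), hneg, ← hEeq] at h1
    have h2 : graphInt μ (fun x => w x ^ 2 + Cp ^ 2 * (graphLap ω μ u x) ^ 2)
        = graphInt μ (fun x => w x ^ 2)
          + Cp ^ 2 * graphInt μ (fun x => (graphLap ω μ u x) ^ 2) := by
      rw [graphInt_add μ (fun x => w x ^ 2) (fun x => Cp ^ 2 * (graphLap ω μ u x) ^ 2),
        graphInt_smul μ (fun x => (graphLap ω μ u x) ^ 2) (Cp ^ 2)]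
    rw [h2] at h1
    exact h1
  have hEbound : E ≤ Cp * graphInt μ (fun x => (graphLap ω μ u x) ^ 2) := by
    have h' : Cp * E ≤ Cp * (Cp * graphInt μ (fun x => (graphLap ω μ u x) ^ 2)) := by
      linarith only [hPw, hint1]
    exact (mul_le_mul_iff_right₀ hCp).mp h'
  have hEfin : E ≤ Cp * (MΔ ^ 2 * graphVol μ) := by
    calc E ≤ Cp * graphInt μ (fun x => (graphLap ω μ u x) ^ 2) := hEbound
      _ ≤ Cp * (MΔ ^ 2 * graphVol μ) := mul_le_mul_of_nonneg_left hΔu2 hCp.le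
  have hw2 : graphInt μ (fun x => w x ^ 2) ≤ Cp ^ 2 * (MΔ ^ 2 * graphVol μ) := by
    calc graphInt μ (fun x => w x ^ 2) ≤ Cp * E := hPw
      _ ≤ Cp * (Cp * (MΔ ^ 2 * graphVol μ)) := mul_le_mul_of_nonneg_left hEfin hCp.le
      _ = Cp ^ 2 * (MΔ ^ 2 * graphVol μ) := by ring
  -- pointwise bound on w
  have hwx : ∀ x, |w x| ≤ κ * MΔ := by
    intro x
    have h1 : μ xm * w x ^ 2 ≤ graphInt μ (fun z => w z ^ 2) := by
      calc μ xm * w x ^ 2 ≤ μ x * w x ^ 2 :=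
            mul_le_mul_of_nonneg_right (hmle x) (sq_nonneg _)
        _ ≤ graphInt μ (fun z => w z ^ 2) :=
            single_le_graphInt μ hμ _ (fun z => sq_nonneg _) x
    have h2 : w x ^ 2 ≤ (κ * MΔ) ^ 2 := by
      have e : (κ * MΔ) ^ 2 = Cp ^ 2 * (graphVol μ / μ xm) * MΔ ^ 2 := by
        rw [hκ_def, mul_pow, mul_pow, Real.sq_sqrt (by positivity)]
      have e2 : Cp ^ 2 * (graphVol μ / μ xm) * MΔ ^ 2
          = Cp ^ 2 * (MΔ ^ 2 * graphVol μ) / μ xm := by ring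
      rw [e, e2, le_div_iff₀ hm]
      linarith [h1, hw2]
    have h3 : |w x| = Real.sqrt (w x ^ 2) := (Real.sqrt_sq_eq_abs _).symm
    rw [h3]
    calc Real.sqrt (w x ^ 2) ≤ Real.sqrt ((κ * MΔ) ^ 2) := Real.sqrt_le_sqrt h2
      _ = κ * MΔ := Real.sqrt_sq (by positivity)
  -- upper bound on mean
  have hub_le : ub ≤ B := by
    have h1 : graphInt μ u ≤ graphInt μ (fun _ => B) := by
      apply graphInt_mono μ hμ
      intro x
      have h := hu x
      have h2 : -u₀ x ≤ |u₀ x| := neg_le_abs (u₀ x)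
      linarith [hB x]
    rw [graphInt_const] at h1
    rw [hub_def]
    show (1 / graphVol μ) * graphInt μ u ≤ B
    calc (1 / graphVol μ) * graphInt μ u ≤ (1 / graphVol μ) * (B * graphVol μ) :=
        mul_le_mul_of_nonneg_left h1 (by positivity)
      _ = B := by field_simp
  -- extraction of a good point from the v-equation
  set F2 : V → ℝ := fun x => Real.exp (u₀ x + u x) * G (Real.exp (u₀ x + u x)) *
      primFun H (Real.exp (v₀ x + v x)) with hF2_def
  have hF2nn : ∀ x, 0 ≤ F2 x := by
    intro x
    rw [hF2_def]
    have h1 : 0 < G (Real.exp (u₀ x + u x)) := hGpos _ (Real.exp_pos _).le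
    have h2 : 0 ≤ primFun H (Real.exp (v₀ x + v x)) :=
      primFun_nonneg H hHpos _ (hEv_le x)
    positivity
  have hident : lam * graphInt μ F2 = 4 * Real.pi * N2 := by
    have h0' := graphInt_lap_zero ω μ hω_symm hμ v
    have h1 : graphInt μ (graphLap ω μ v)
        = graphInt μ (fun x => -lam * F2 x + 4 * Real.pi * N2 / graphVol μ) := by
      unfold graphInt
      apply Finset.sum_congr rfl
      intro x _
      show μ x * graphLap ω μ v x
          = μ x * (-lam * F2 x + 4 * Real.pi * N2 / graphVol μ)
      rw [(hsol x).2]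
      simp only [hF2_def]
      ring
    rw [graphInt_affine μ F2 (-lam) (4 * Real.pi * N2 / graphVol μ), h0'] at h1
    have h2 : (4 * Real.pi * N2 / graphVol μ) * graphVol μ = 4 * Real.pi * N2 := by
      field_simp
    rw [h2] at h1
    linarith
  have hxstar : ∃ x, 4 * Real.pi * N2 / (lam * n) ≤ μ x * F2 x := by
    by_contra hcon
    push_neg at hcon
    have hlt : graphInt μ F2 < n * (4 * Real.pi * N2 / (lam * n)) := by
      unfold graphInt
      calc ∑ x, μ x * F2 x < ∑ _x : V, 4 * Real.pi * N2 / (lam * n) :=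
          Finset.sum_lt_sum_of_nonempty Finset.univ_nonempty (fun x _ => hcon x)
        _ = n * (4 * Real.pi * N2 / (lam * n)) := by
            rw [Finset.sum_const, nsmul_eq_mul, Finset.card_univ]
    have he : n * (4 * Real.pi * N2 / (lam * n)) = 4 * Real.pi * N2 / lam := by
      field_simp
    rw [he] at hlt
    have hF2int : graphInt μ F2 = 4 * Real.pi * N2 / lam := by
      field_simp
      linarith [hident]
    rw [hF2int] at hlt
    exact lt_irrefl _ hlt
  obtain ⟨xs, hxs⟩ := hxstar
  -- lower bound for exp (u₀ + u) at xs
  have hkey : c₂ / lam ≤ Real.exp (u₀ xs + u xs) := by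
    have ha0 : (0:ℝ) < Real.exp (u₀ xs + u xs) := Real.exp_pos _
    have ha1 : Real.exp (u₀ xs + u xs) ≤ 1 := hEu_le xs
    have hGle : G (Real.exp (u₀ xs + u xs)) ≤ G 1 :=
      hGmono.monotoneOn (Set.mem_Ici.mpr ha0.le) (Set.mem_Ici.mpr zero_le_one) ha1
    have hGa : 0 < G (Real.exp (u₀ xs + u xs)) := hGpos _ ha0.le
    have hhle : primFun H (Real.exp (v₀ xs + v xs)) ≤ h0 :=
      primFun_le_zero H hHpos hHsmooth _ (Real.exp_pos _).le (hEv_le xs)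
    have hhnn : 0 ≤ primFun H (Real.exp (v₀ xs + v xs)) :=
      primFun_nonneg H hHpos _ (hEv_le xs)
    have t1 : G (Real.exp (u₀ xs + u xs)) * primFun H (Real.exp (v₀ xs + v xs))
        ≤ G 1 * h0 := mul_le_mul hGle hhle hhnn hG1.le
    have t2 : F2 xs ≤ Real.exp (u₀ xs + u xs) * (G 1 * h0) := by
      rw [hF2_def]
      calc Real.exp (u₀ xs + u xs) * G (Real.exp (u₀ xs + u xs)) *
            primFun H (Real.exp (v₀ xs + v xs))
          = Real.exp (u₀ xs + u xs) * (G (Real.exp (u₀ xs + u xs)) *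
            primFun H (Real.exp (v₀ xs + v xs))) := by ring
        _ ≤ Real.exp (u₀ xs + u xs) * (G 1 * h0) :=
            mul_le_mul_of_nonneg_left t1 ha0.le
    have t3 : μ xs * F2 xs ≤ μ xM * (Real.exp (u₀ xs + u xs) * (G 1 * h0)) := by
      apply mul_le_mul (hMμge xs) t2 (hF2nn xs) hMμ.le
    have step1 : 4 * Real.pi * N2 / (lam * n) ≤
        μ xM * (Real.exp (u₀ xs + u xs) * (G 1 * h0)) := le_trans hxs t3
    have step2 : 4 * Real.pi * N2 ≤
        μ xM * (Real.exp (u₀ xs + u xs) * (G 1 * h0)) * (lam * n) :=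
      (div_le_iff₀ (by positivity)).mp step1
    rw [div_le_iff₀ hlam, hc2_def, div_le_iff₀ (by positivity)]
    calc 4 * Real.pi * N2
        ≤ μ xM * (Real.exp (u₀ xs + u xs) * (G 1 * h0)) * (lam * n) := step2
      _ = Real.exp (u₀ xs + u xs) * lam * (n * μ xM * G 1 * h0) := by ring
  -- lower bound for u at xs
  have hus : -(B + |Real.log c₂| + lam) ≤ u xs := by
    have hlog : Real.log (c₂ / lam) ≤ u₀ xs + u xs := by
      have h1 : Real.log (c₂ / lam) ≤ Real.log (Real.exp (u₀ xs + u xs)) :=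
        Real.log_le_log (by positivity) hkey
      rwa [Real.log_exp] at h1
    have hlogdiv : Real.log (c₂ / lam) = Real.log c₂ - Real.log lam :=
      Real.log_div hc₂.ne' hlam.ne'
    have hloglam : Real.log lam ≤ lam := by
      have := Real.log_le_sub_one_of_pos hlam
      linarith
    have hu₀b : u₀ xs ≤ B := le_trans (le_abs_self _) (hB xs)
    have hlogc : -|Real.log c₂| ≤ Real.log c₂ := neg_abs_le _
    linarith [hlog, hlogdiv]
  -- bounds for the mean
  have hub_ge : -(B + |Real.log c₂| + lam + κ * MΔ) ≤ ub := by
    have h1 := abs_le.mp (hwx xs)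
    have h2 : w xs = u xs - ub := by rw [hw_def]
    linarith [hus, h1.1, h1.2]
  have hub_abs : |ub| ≤ c₄ * (1 + lam) := by
    rw [abs_le]
    have hκM : κ * MΔ ≤ κ * (c₃ * (1 + lam)) := mul_le_mul_of_nonneg_left hMΔle hκ
    constructor
    · rw [hc4_def]
      linarith [hub_ge, hκM, mul_nonneg hlam.le hB0,
        mul_nonneg hlam.le (abs_nonneg (Real.log c₂)), hlam.le]
    · rw [hc4_def]
      linarith [hub_le, abs_nonneg (Real.log c₂), mul_nonneg hκ hc₃.le,
        mul_nonneg hlam.le hB0, mul_nonneg hlam.le (abs_nonneg (Real.log c₂)),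
        mul_nonneg hlam.le (mul_nonneg hκ hc₃.le), hlam.le]
  -- bound for ∫ u²
  have hu2 : graphInt μ (fun x => u x ^ 2)
      ≤ 2 * graphInt μ (fun x => w x ^ 2) + 2 * ub ^ 2 * graphVol μ := by
    have hp : ∀ x, u x ^ 2 ≤ 2 * w x ^ 2 + 2 * ub ^ 2 := by
      intro x
      have h2 : w x = u x - ub := by rw [hw_def]
      rw [h2]
      linarith [sq_nonneg (u x - 2 * ub)]
    calc graphInt μ (fun x => u x ^ 2)
        ≤ graphInt μ (fun x => 2 * w x ^ 2 + 2 * ub ^ 2) := graphInt_mono μ hμ _ _ hp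
      _ = 2 * graphInt μ (fun x => w x ^ 2) + 2 * ub ^ 2 * graphVol μ := by
          have := graphInt_affine μ (fun x => w x ^ 2) 2 (2 * ub ^ 2)
          exact this
  -- final assembly
  have hfinal : graphInt μ (fun x => gradSq ω μ u x + u x ^ 2) ≤ T * (1 + lam) ^ 2 := by
    rw [graphInt_add μ (gradSq ω μ u) (fun x => u x ^ 2)]
    have b3 : MΔ ^ 2 ≤ c₃ ^ 2 * (1 + lam) ^ 2 := by
      calc MΔ ^ 2 ≤ (c₃ * (1 + lam)) ^ 2 := pow_le_pow_left₀ hMΔ0 hMΔle 2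
        _ = c₃ ^ 2 * (1 + lam) ^ 2 := by ring
    have b4 : ub ^ 2 ≤ c₄ ^ 2 * (1 + lam) ^ 2 := by
      have h := pow_le_pow_left₀ (abs_nonneg ub) hub_abs 2
      rw [sq_abs] at h
      calc ub ^ 2 ≤ (c₄ * (1 + lam)) ^ 2 := h
        _ = c₄ ^ 2 * (1 + lam) ^ 2 := by ring
    have e2 : Cp * (MΔ ^ 2 * graphVol μ) ≤ Cp * graphVol μ * c₃ ^ 2 * (1 + lam) ^ 2 := by
      linarith [mul_le_mul_of_nonneg_left b3
        (show (0:ℝ) ≤ Cp * graphVol μ by positivity)]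
    have e3 : Cp ^ 2 * (MΔ ^ 2 * graphVol μ)
        ≤ Cp ^ 2 * graphVol μ * c₃ ^ 2 * (1 + lam) ^ 2 := by
      linarith [mul_le_mul_of_nonneg_left b3
        (show (0:ℝ) ≤ Cp ^ 2 * graphVol μ by positivity)]
    have e4 : ub ^ 2 * graphVol μ ≤ c₄ ^ 2 * graphVol μ * (1 + lam) ^ 2 := by
      linarith [mul_le_mul_of_nonneg_right b4 hvol.le]
    rw [hT_def]
    linarith [hEfin, hw2, hu2, e2, e3, e4]
  have hsb : sobolevNorm ω μ u
      = Real.sqrt (graphInt μ (fun x => gradSq ω μ u x + u x ^ 2)) := rfl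
  rw [hsb]
  calc Real.sqrt (graphInt μ (fun x => gradSq ω μ u x + u x ^ 2))
      ≤ Real.sqrt (T * (1 + lam) ^ 2) := Real.sqrt_le_sqrt hfinal
    _ = Real.sqrt T * (1 + lam) := by
        rw [Real.sqrt_mul hT.le, Real.sqrt_sq (by linarith)]
    _ ≤ (1 + Real.sqrt T) * (1 + lam + lam ^ 2) := by
        linarith [mul_nonneg (Real.sqrt_nonneg T) (sq_nonneg lam), hlam.le, sq_nonneg lam]

theorem stmt_14
    {V : Type*} [Fintype V] [DecidableEq V]
    (hV : 1 < Fintype.card V)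
    (ω : V → V → ℝ) (μ : V → ℝ)
    (hω_nonneg : ∀ x y, 0 ≤ ω x y)
    (hω_symm : ∀ x y, ω x y = ω y x)
    (hω_diag : ∀ x, ω x x = 0)
    (hconn : ∀ x y : V, x ≠ y → ∃ (n : ℕ) (c : Fin (n + 1) → V),
      c 0 = x ∧ c (Fin.last n) = y ∧ ∀ i : Fin n, 0 < ω (c i.castSucc) (c i.succ))
    (hμ : ∀ x, 0 < μ x)
    (G H : ℝ → ℝ)
    (hGpos : ∀ s, 0 ≤ s → 0 < G s) (hHpos : ∀ s, 0 ≤ s → 0 < H s)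
    (hGmono : StrictMonoOn G (Set.Ici 0)) (hHmono : StrictMonoOn H (Set.Ici 0))
    (hGsmooth : ContDiffOn ℝ (⊤ : ℕ∞) G (Set.Ici 0)) (hHsmooth : ContDiffOn ℝ (⊤ : ℕ∞) H (Set.Ici 0))
    (N1 N2 : ℕ) (hN1 : 0 < N1) (hN2 : 0 < N2)
    (p1 : Fin N1 → V) (p2 : Fin N2 → V)
    (u₀ v₀ : V → ℝ)
    (hu₀ : ∀ x, graphLap ω μ u₀ x =
      -(4 * Real.pi * N1) / graphVol μ + 4 * Real.pi * ∑ j, diracDelta μ (p1 j) x)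
    (hv₀ : ∀ x, graphLap ω μ v₀ x =
      -(4 * Real.pi * N2) / graphVol μ + 4 * Real.pi * ∑ j, diracDelta μ (p2 j) x)
 :
    ∃ C : ℝ, 0 < C ∧ ∀ lam : ℝ, 0 < lam → ∀ u v : V → ℝ,
      isSolution ω μ G H N1 N2 u₀ v₀ lam u v →
      (∀ x, u₀ x + u x ≤ 0) → (∀ x, v₀ x + v x ≤ 0) →
      sobolevNorm ω μ u ≤ C * (1 + lam + lam ^ 2) ∧
      sobolevNorm ω μ v ≤ C * (1 + lam + lam ^ 2) := by
  obtain ⟨C₁, hC₁, hbu⟩ := master hV ω μ hω_nonneg hω_symm hconn hμ G H hGpos hHpos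
    hGmono hHmono hGsmooth hHsmooth N1 N2 hN2 u₀ v₀
  obtain ⟨C₂, hC₂, hbv⟩ := master hV ω μ hω_nonneg hω_symm hconn hμ H G hHpos hGpos
    hHmono hGmono hHsmooth hGsmooth N2 N1 hN1 v₀ u₀
  refine ⟨C₁ + C₂, by positivity, ?_⟩
  intro lam hlam u v hsol hu hv
  have hsol' : isSolution ω μ H G N2 N1 v₀ u₀ lam v u := fun x => ⟨(hsol x).2, (hsol x).1⟩
  have h1 := hbu lam hlam u v hsol hu hv
  have h2 := hbv lam hlam v u hsol' hv hu
  have hpos : (0:ℝ) ≤ 1 + lam + lam ^ 2 := by positivity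
  constructor
  · calc sobolevNorm ω μ u ≤ C₁ * (1 + lam + lam ^ 2) := h1
      _ ≤ (C₁ + C₂) * (1 + lam + lam ^ 2) := by
        linarith [mul_nonneg hC₂.le hpos]
  · calc sobolevNorm ω μ v ≤ C₂ * (1 + lam + lam ^ 2) := h2
      _ ≤ (C₁ + C₂) * (1 + lam + lam ^ 2) := by
        linarith [mul_nonneg hC₁.le hpos]
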